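/- For 0 < x < 1, ∫_0^x log^2(1+t)/t dt = log(x) log^2(1+x) - (2/3) log^3(1+x) - 2 Li_3(1/(1+x)) - 2 log(1+x) Li_2(1/(1+x)) + 2 ζ(3). -/

import Mathlib

open Real Filter Finset

noncomputable def Li (m : ℕ) (x : ℝ) : ℝ := ∑' n : ℕ, x ^ (n + 1) / (n + 1 : ℝ) ^ m

noncomputable def H (p n : ℕ) : ℝ := ∑ j ∈ Finset.Icc 1 n, 1 / (j : ℝ) ^ p

noncomputable def Hbar (p n : ℕ) : ℝ := ∑ j ∈ Finset.Icc 1 n, (-1 : ℝ) ^ (j - 1) / (j : ℝ) ^ p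

/-!
With `u = 1 / (1 + t)` one has `d/dt Li (m + 1) u = -Li m u / (1 + t)` and
`Li 1 u = -log (1 - u) = log (1 + t) - log t`, and with these the derivative of the right-hand
side, as a function of `x > 0`, collapses to `log (1 + x) ^ 2 / x`. Since `log 0 = 0` in Mathlib,
this primitive takes the value `-2 Li 3 1` at `0`, and it is continuous there from the right
because `log t * log (1 + t) ^ 2 = O(t ^ 2 log t)`; so the fundamental theorem of calculus applies
on all of `[0, x]`.
-/

open Set Topology MeasureTheory

lemma norm_pow_div_succ_pow (z : ℝ) (k m n : ℕ) :
    ‖z ^ k / (n + 1 : ℝ) ^ m‖ = |z| ^ k / ((n : ℝ) + 1) ^ m := by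
  rw [norm_div, norm_pow, norm_pow, norm_eq_abs, norm_of_nonneg n.cast_add_one_pos.le]

lemma norm_pow_succ_div_le {m : ℕ} (hm : 2 ≤ m) {y : ℝ} (hy : |y| ≤ 1) (n : ℕ) :
    ‖y ^ (n + 1) / (n + 1 : ℝ) ^ m‖ ≤ 1 / ((n : ℝ) + 1) ^ 2 := by
  have hn : (1 : ℝ) ≤ n + 1 := by linarith [n.cast_nonneg (α := ℝ)]
  rw [norm_pow_div_succ_pow]
  calc |y| ^ (n + 1) / ((n : ℝ) + 1) ^ m ≤ 1 / ((n : ℝ) + 1) ^ m := by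
        gcongr; exact pow_le_one₀ (abs_nonneg y) hy
    _ ≤ 1 / ((n : ℝ) + 1) ^ 2 := by gcongr

lemma continuousOn_Li {m : ℕ} (hm : 2 ≤ m) : ContinuousOn (Li m) (Icc (-1) 1) := by
  refine continuousOn_tsum (fun n => by fun_prop) ?_
    (fun n y hy => norm_pow_succ_div_le hm (abs_le.mpr hy) n)
  exact_mod_cast (summable_nat_add_iff 1).mpr (Real.summable_one_div_nat_pow.mpr one_lt_two)

lemma hasDerivAt_Li_succ (m : ℕ) {y : ℝ} (hy : |y| < 1) :
    HasDerivAt (Li (m + 1)) (∑' n : ℕ, y ^ n / (n + 1 : ℝ) ^ m) y := by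
  obtain ⟨r, hyr, hr1⟩ := exists_between hy
  have hr0 : 0 < r := (abs_nonneg y).trans_lt hyr
  refine hasDerivAt_tsum_of_isPreconnected (u := fun n : ℕ => r ^ n) (t := Ioo (-r) r)
    (g := fun (n : ℕ) (z : ℝ) => z ^ (n + 1) / (n + 1 : ℝ) ^ (m + 1))
    (g' := fun (n : ℕ) (z : ℝ) => z ^ n / (n + 1 : ℝ) ^ m)
    (summable_geometric_of_lt_one hr0.le hr1) isOpen_Ioo (convex_Ioo (-r) r).isPreconnected
    (fun n z _ => ?_) (fun n z hz => ?_)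
    (y₀ := 0) ⟨neg_lt_zero.mpr hr0, hr0⟩ (by simp) (abs_lt.mp hyr)
  · refine ((hasDerivAt_pow (n + 1) z).div_const ((n + 1 : ℝ) ^ (m + 1))).congr_deriv ?_
    push_cast
    field_simp
    ring
  · have hn : (1 : ℝ) ≤ n + 1 := by linarith [n.cast_nonneg (α := ℝ)]
    rw [norm_pow_div_succ_pow]
    calc |z| ^ n / ((n : ℝ) + 1) ^ m ≤ |z| ^ n := div_le_self (by positivity) (one_le_pow₀ hn)
      _ ≤ r ^ n := pow_le_pow_left₀ (abs_nonneg z) (abs_le.mpr ⟨hz.1.le, hz.2.le⟩) n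

lemma hasDerivAt_Li_succ_of_ne_zero (m : ℕ) {y : ℝ} (hy : |y| < 1) (hy0 : y ≠ 0) :
    HasDerivAt (Li (m + 1)) (Li m y / y) y := by
  convert hasDerivAt_Li_succ m hy using 1
  rw [div_eq_iff hy0, Li, ← tsum_mul_right]
  congr 1 with n
  ring

lemma Li_one {y : ℝ} (hy : |y| < 1) : Li 1 y = -log (1 - y) := by
  simpa [Li] using (hasSum_pow_div_log_of_abs_lt_one hy).tsum_eq

lemma abs_one_div_one_add_lt_one {t : ℝ} (ht : 0 < t) : |1 / (1 + t)| < 1 := by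
  rw [abs_of_pos (by positivity), div_lt_one (by positivity)]
  linarith

lemma hasDerivAt_Li_succ_one_div_one_add (m : ℕ) {t : ℝ} (ht : 0 < t) :
    HasDerivAt (fun s => Li (m + 1) (1 / (1 + s))) (-Li m (1 / (1 + t)) / (1 + t)) t := by
  have h1t : 0 < 1 + t := by linarith
  have hinv : HasDerivAt (fun s => 1 / (1 + s)) (-1 / (1 + t) ^ 2) t := by
    simpa [one_div] using ((hasDerivAt_id t).const_add 1).fun_inv h1t.ne'
  have hLi := hasDerivAt_Li_succ_of_ne_zero m (abs_one_div_one_add_lt_one ht) (by positivity)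
  refine (hLi.comp t hinv).congr_deriv ?_
  field_simp

lemma Li_one_one_div_one_add {t : ℝ} (ht : 0 < t) :
    Li 1 (1 / (1 + t)) = log (1 + t) - log t := by
  have h1t : 0 < 1 + t := by linarith
  have h : 1 - 1 / (1 + t) = t / (1 + t) := by field_simp; ring
  rw [Li_one (abs_one_div_one_add_lt_one ht), h, log_div ht.ne' h1t.ne']
  ring

lemma continuousOn_Li_one_div_one_add {m : ℕ} (hm : 2 ≤ m) :
    ContinuousOn (fun t => Li m (1 / (1 + t))) (Ici 0) := by
  refine (continuousOn_Li hm).comp (fun t ht => ?_) (fun t (ht : 0 ≤ t) => ?_)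
  · have : 1 + t ≠ 0 := by linarith [mem_Ici.mp ht]
    fun_prop (disch := assumption)
  · have h1t : 0 < 1 + t := by linarith
    exact ⟨by linarith [(by positivity : 0 < 1 / (1 + t))], (div_le_one h1t).mpr (by linarith)⟩

noncomputable def logSqPrimitive (t : ℝ) : ℝ :=
  log t * log (1 + t) ^ 2 - 2 / 3 * log (1 + t) ^ 3 - 2 * Li 3 (1 / (1 + t))
    - 2 * log (1 + t) * Li 2 (1 / (1 + t))

lemma hasDerivAt_logSqPrimitive {t : ℝ} (ht : 0 < t) :
    HasDerivAt logSqPrimitive (log (1 + t) ^ 2 / t) t := by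
  have h1t : 0 < 1 + t := by linarith
  have hlog : HasDerivAt (fun s => log (1 + s)) (1 / (1 + t)) t := by
    simpa [one_div] using ((hasDerivAt_id t).const_add 1).log h1t.ne'
  have hLi3 := hasDerivAt_Li_succ_one_div_one_add 2 ht
  have hLi2 := hasDerivAt_Li_succ_one_div_one_add 1 ht
  rw [Li_one_one_div_one_add ht] at hLi2
  refine (((((hasDerivAt_log ht.ne').mul (hlog.pow 2)).sub ((hlog.pow 3).const_mul (2 / 3))).sub
    (hLi3.const_mul 2)).sub ((hlog.const_mul 2).mul hLi2)).congr_deriv ?_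
  simp only [Pi.pow_apply]
  field_simp
  ring

lemma log_one_add_sq_le {t : ℝ} (ht : 0 ≤ t) : log (1 + t) ^ 2 ≤ t ^ 2 := by
  have := log_le_sub_one_of_pos (by linarith : 0 < 1 + t)
  exact pow_le_pow_left₀ (log_nonneg (by linarith)) (by linarith) 2

lemma continuousWithinAt_log_mul_log_one_add_sq :
    ContinuousWithinAt (fun t => log t * log (1 + t) ^ 2) (Ici 0) 0 := by
  have hbound : Tendsto (fun t => |t * log t| * t) (𝓝[≥] 0) (𝓝 0) := by
    have hc : Continuous fun t => |t * log t| * t := continuous_mul_log.abs.mul continuous_id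
    exact (hc.tendsto' 0 0 (by simp)).mono_left nhdsWithin_le_nhds
  simp only [ContinuousWithinAt, log_zero, zero_mul]
  refine squeeze_zero_norm' ?_ hbound
  filter_upwards [self_mem_nhdsWithin] with t (ht : 0 ≤ t)
  calc ‖log t * log (1 + t) ^ 2‖ = |log t| * log (1 + t) ^ 2 := by
        rw [norm_mul, norm_pow, norm_eq_abs, norm_eq_abs, sq_abs]
    _ ≤ |log t| * t ^ 2 := mul_le_mul_of_nonneg_left (log_one_add_sq_le ht) (abs_nonneg _)
    _ = |t * log t| * t := by rw [abs_mul, abs_of_nonneg ht]; ring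

lemma continuousOn_logSqPrimitive : ContinuousOn logSqPrimitive (Ici 0) := by
  intro t ht
  rcases (mem_Ici.mp ht).eq_or_lt with rfl | ht
  · have hL : ContinuousWithinAt (fun t => log (1 + t)) (Ici 0) 0 := by
      fun_prop (disch := norm_num)
    have hLi3 := continuousOn_Li_one_div_one_add (m := 3) (by norm_num) 0 (mem_Ici.mpr le_rfl)
    have hLi2 := continuousOn_Li_one_div_one_add (m := 2) le_rfl 0 (mem_Ici.mpr le_rfl)
    exact ((continuousWithinAt_log_mul_log_one_add_sq.sub ((hL.pow 3).const_mul _)).sub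
      (hLi3.const_mul 2)).sub ((hL.const_mul 2).mul hLi2)
  · exact (hasDerivAt_logSqPrimitive ht).continuousAt.continuousWithinAt

lemma intervalIntegrable_log_one_add_sq_div {x : ℝ} (hx : 0 ≤ x) :
    IntervalIntegrable (fun t => log (1 + t) ^ 2 / t) volume 0 x := by
  have hmeas : Measurable fun t => log (1 + t) ^ 2 / t := by fun_prop
  refine (continuous_id.intervalIntegrable 0 x).mono_fun' hmeas.aestronglyMeasurable ?_
  rw [uIoc_of_le hx]
  filter_upwards [ae_restrict_mem measurableSet_Ioc] with t ht
  rw [id_eq, norm_of_nonneg (div_nonneg (sq_nonneg _) ht.1.le), div_le_iff₀ ht.1]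
  nlinarith [log_one_add_sq_le ht.1.le]

theorem stmt10_general (x : ℝ) (hx0 : 0 < x) :
    ∫ t in (0 : ℝ)..x, (Real.log (1 + t)) ^ 2 / t
      = Real.log x * (Real.log (1 + x)) ^ 2 - (2 / 3) * (Real.log (1 + x)) ^ 3
        - 2 * Li 3 (1 / (1 + x)) - 2 * Real.log (1 + x) * Li 2 (1 / (1 + x))
        + 2 * Li 3 1 := by
  rw [intervalIntegral.integral_eq_sub_of_hasDerivAt_of_le hx0.le
    (continuousOn_logSqPrimitive.mono Icc_subset_Ici_self)
    (fun t ht => hasDerivAt_logSqPrimitive ht.1) (intervalIntegrable_log_one_add_sq_div hx0.le)]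
  simp only [logSqPrimitive, log_zero, log_one, add_zero, div_one]
  ring

theorem stmt10 (x : ℝ) (hx0 : 0 < x) (hx1 : x < 1) :
    ∫ t in (0 : ℝ)..x, (Real.log (1 + t)) ^ 2 / t
      = Real.log x * (Real.log (1 + x)) ^ 2 - (2 / 3) * (Real.log (1 + x)) ^ 3
        - 2 * Li 3 (1 / (1 + x)) - 2 * Real.log (1 + x) * Li 2 (1 / (1 + x))
        + 2 * Li 3 1 :=
  stmt10_general x hx0
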